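/- Simultaneous improvement of a family of subsolutions: with Ȳ the subsolution built from the family (Ȳ^{l})_{l∈I} via the maximizing selector l*(j) over nondecreasing sets K(j), and r̄ ∈ A_0 satisfying r̄_j^⊤ E_j[β_{j+1} Ȳ_{j+1}] − F_j^{#}(r̄_j) = F_j(E_j[β_{j+1} Ȳ_{j+1}]) P-a.s., for any M ∈ M_D it holds P-a.s. for all j = 0,...,J-1 that E_j[θ_j^{low}(r̄,M)] ≥ F_j(E_j[β_{j+1} Ȳ_{j+1}]) = max_{l ∈ K(j+1)} F_j(E_j[β_{j+1} Ȳ_{j+1}^{l}]) ≥ max_{l ∈ K(j+1)} Ȳ_j^{l}. -/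

import Mathlib

/-!
The identity with the maximum holds because the selector `l*(j+1)` is `ℱ_j`-measurable and can
be pulled out of `E_j`; together with the subsolution property of every `Ȳ^l` it gives the lower
bound by `max_l Ȳ^l_j`, and, since `K(j) ⊆ K(j+1)`, it shows that `Ȳ` is a subsolution at all
positive times.

The bound by `E_j[θ^{low}_j]` then follows by backward induction on `Ȳ_j ≤ E_j[θ_j]`. In the step
the martingale increment vanishes under `E_j`, `F_j^#(r̄_j)` is `ℱ_j`-measurable by the optimality
condition, and the tower property gives `E_j[r̄_j^⊤ β_{j+1} θ_{j+1}] ≥ r̄_j^⊤ E_j[β_{j+1} Ȳ_{j+1}]`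
provided `r̄_j^⊤ β_{j+1} ≥ 0`. That sign comes from convexity: by the optimality condition `r̄_j` is
a subgradient of `F_j`, and by monotonicity `F_j(-t β_{j+1}) ≤ F_j(0)` for `t ≥ 0`; a subgradient
of a convex function bounded above on a ray is nonnegative in the direction of the ray.
-/

open MeasureTheory
open scoped ENNReal

noncomputable section

variable {Ω : Type*} {m0 : MeasurableSpace Ω}

/-- `L^{∞-}`: membership in `L^p` for every finite `p ≥ 1`. -/
def MemLinfMinus {E : Type*} [NormedAddCommGroup E] (μ : Measure Ω) (f : Ω → E) : Prop :=
  ∀ p : ℝ≥0∞, 1 ≤ p → p ≠ ⊤ → MemLp f p μ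

/-- Euclidean dot product on `Fin D → ℝ`. -/
def dotp {D : ℕ} (x y : Fin D → ℝ) : ℝ := ∑ d, x d * y d

/-- Componentwise conditional expectation of an `ℝ^D`-valued random vector. -/
def cexpV (μ : Measure Ω) (m : MeasurableSpace Ω) {D : ℕ} (f : Ω → Fin D → ℝ) :
    Ω → Fin D → ℝ :=
  fun ω d => (μ[fun ω' => f ω' d|m]) ω

/-- The `ℝ^D`-valued process `β_j Y_j` (vector weight times scalar process). -/
def bprod {D : ℕ} (β : ℕ → Ω → Fin D → ℝ) (Y : ℕ → Ω → ℝ) (j : ℕ) : Ω → Fin D → ℝ :=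
  fun ω d => β j ω d * Y j ω

/-- Convex (Fenchel) conjugate, with values in `EReal`. -/
def econj {D : ℕ} (f : (Fin D → ℝ) → ℝ) (u : Fin D → ℝ) : EReal :=
  ⨆ z : Fin D → ℝ, ((dotp u z - f z : ℝ) : EReal)

/-- Real-valued version of the convex conjugate (meaningful where the conjugate is finite). -/
def rconj {D : ℕ} (f : (Fin D → ℝ) → ℝ) (u : Fin D → ℝ) : ℝ := (econj f u).toReal

/-- The Doob martingale of an `ℝ^D`-valued process `Z`:
`j ↦ ∑_{i=0}^{j-1} (Z_{i+1} - E_i[Z_{i+1}])`. -/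
def doobMart (μ : Measure Ω) (ℱ : Filtration ℕ m0) {D : ℕ} (Z : ℕ → Ω → Fin D → ℝ) :
    ℕ → Ω → Fin D → ℝ :=
  fun j ω d => ∑ i ∈ Finset.range j, (Z (i + 1) ω d - cexpV μ (ℱ i) (Z (i + 1)) ω d)

/-- Standing assumptions on the data `(F, β, ξ)` of the convex dynamic program:
measurability, adaptedness and convexity of the generator, polynomial growth with an
`L^{∞-}` coefficient, and integrability/adaptedness of the weights and terminal condition. -/
structure Setting (μ : Measure Ω) (ℱ : Filtration ℕ m0) (J D : ℕ)
    (F : ℕ → Ω → (Fin D → ℝ) → ℝ) (β : ℕ → Ω → Fin D → ℝ) (ξ : Ω → ℝ) : Prop where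
  F_meas : ∀ j < J, Measurable fun p : Ω × (Fin D → ℝ) => F j p.1 p.2
  F_adapted : ∀ j < J, ∀ z : Fin D → ℝ, StronglyMeasurable[ℱ j] fun ω => F j ω z
  F_convex : ∀ j < J, ∀ ω, ConvexOn ℝ Set.univ (F j ω)
  F_growth : ∃ q : ℝ, 0 ≤ q ∧ ∃ α : ℕ → Ω → ℝ,
      (∀ j < J, StronglyMeasurable[ℱ j] (α j)) ∧
      (∀ j < J, ∀ᵐ ω ∂μ, 0 ≤ α j ω) ∧ (∀ j < J, MemLinfMinus μ (α j)) ∧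
      ∀ j < J, ∀ z : Fin D → ℝ, ∀ᵐ ω ∂μ, |F j ω z| ≤ α j ω * (1 + ‖z‖ ^ q)
  β_adapted : ∀ j ≤ J, StronglyMeasurable[ℱ j] (β j)
  β_int : ∀ j ≤ J, MemLinfMinus μ (β j)
  ξ_meas : StronglyMeasurable[ℱ J] ξ
  ξ_int : MemLinfMinus μ ξ

/-- `Y` is an adapted `L^{∞-}` solution of the dynamic programming equation
`Y_j = F_j(E_j[β_{j+1} Y_{j+1}])`, `Y_J = ξ`. -/
def IsSolution (μ : Measure Ω) (ℱ : Filtration ℕ m0) (J D : ℕ)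
    (F : ℕ → Ω → (Fin D → ℝ) → ℝ) (β : ℕ → Ω → Fin D → ℝ) (ξ : Ω → ℝ)
    (Y : ℕ → Ω → ℝ) : Prop :=
  (∀ j ≤ J, StronglyMeasurable[ℱ j] (Y j) ∧ MemLinfMinus μ (Y j)) ∧
  (∀ᵐ ω ∂μ, Y J ω = ξ ω) ∧
  (∀ j < J, ∀ᵐ ω ∂μ, Y j ω = F j ω (cexpV μ (ℱ j) (bprod β Y (j + 1)) ω))

/-- Supersolution of the dynamic program. -/
def IsSupersolution (μ : Measure Ω) (ℱ : Filtration ℕ m0) (J D : ℕ)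
    (F : ℕ → Ω → (Fin D → ℝ) → ℝ) (β : ℕ → Ω → Fin D → ℝ) (ξ : Ω → ℝ)
    (Y : ℕ → Ω → ℝ) : Prop :=
  (∀ j ≤ J, StronglyMeasurable[ℱ j] (Y j) ∧ MemLinfMinus μ (Y j)) ∧
  (∀ᵐ ω ∂μ, ξ ω ≤ Y J ω) ∧
  (∀ j < J, ∀ᵐ ω ∂μ, F j ω (cexpV μ (ℱ j) (bprod β Y (j + 1)) ω) ≤ Y j ω)

/-- Subsolution of the dynamic program. -/
def IsSubsolution (μ : Measure Ω) (ℱ : Filtration ℕ m0) (J D : ℕ)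
    (F : ℕ → Ω → (Fin D → ℝ) → ℝ) (β : ℕ → Ω → Fin D → ℝ) (ξ : Ω → ℝ)
    (Y : ℕ → Ω → ℝ) : Prop :=
  (∀ j ≤ J, StronglyMeasurable[ℱ j] (Y j) ∧ MemLinfMinus μ (Y j)) ∧
  (∀ᵐ ω ∂μ, Y J ω ≤ ξ ω) ∧
  (∀ j < J, ∀ᵐ ω ∂μ, Y j ω ≤ F j ω (cexpV μ (ℱ j) (bprod β Y (j + 1)) ω))

/-- The monotonicity assumption: `Y⁽¹⁾ ≥ Y⁽²⁾` a.s. implies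
`F_j(β_{j+1} Y⁽¹⁾) ≥ F_j(β_{j+1} Y⁽²⁾)` a.s. -/
def MonoAssumption (μ : Measure Ω) (J D : ℕ)
    (F : ℕ → Ω → (Fin D → ℝ) → ℝ) (β : ℕ → Ω → Fin D → ℝ) : Prop :=
  ∀ j < J, ∀ Y1 Y2 : Ω → ℝ, MemLinfMinus μ Y1 → MemLinfMinus μ Y2 →
    (∀ᵐ ω ∂μ, Y2 ω ≤ Y1 ω) →
    ∀ᵐ ω ∂μ, F j ω (fun d => β (j + 1) ω d * Y2 ω) ≤ F j ω (fun d => β (j + 1) ω d * Y1 ω)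

/-- The class `M_D` of `ℝ^D`-valued `L^{∞-}` martingales. -/
def IsMartD (μ : Measure Ω) (ℱ : Filtration ℕ m0) {D : ℕ}
    (M : ℕ → Ω → Fin D → ℝ) : Prop :=
  Martingale M ℱ μ ∧ ∀ j, MemLinfMinus μ (M j)

/-- Admissible controls on the time indices `{j₀, ..., J-1}` (the class `A_{j₀}`). -/
def IsAdmissibleFrom (μ : Measure Ω) (ℱ : Filtration ℕ m0) (j₀ J D : ℕ)
    (F : ℕ → Ω → (Fin D → ℝ) → ℝ) (r : ℕ → Ω → Fin D → ℝ) : Prop :=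
  ∀ i, j₀ ≤ i → i < J →
    StronglyMeasurable[ℱ i] (r i) ∧ MemLinfMinus μ (r i) ∧
    (∀ᵐ ω ∂μ, econj (F i ω) (r i ω) ≠ ⊤) ∧
    MemLinfMinus μ (fun ω => rconj (F i ω) (r i ω))

/-- The lower pathwise recursion `θ^{low}(r, M)`:
`θ_J = ξ`, `θ_i = r_i^⊤ (β_{i+1} θ_{i+1}) - r_i^⊤ ΔM_{i+1} - F_i^{#}(r_i)`,
required on the time indices `{j₀, ..., J-1}`. -/
def IsThetaLowFrom (μ : Measure Ω) (j₀ J D : ℕ)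
    (F : ℕ → Ω → (Fin D → ℝ) → ℝ) (β : ℕ → Ω → Fin D → ℝ) (ξ : Ω → ℝ)
    (r M : ℕ → Ω → Fin D → ℝ) (θ : ℕ → Ω → ℝ) : Prop :=
  (∀ᵐ ω ∂μ, θ J ω = ξ ω) ∧
  ∀ i, j₀ ≤ i → i < J → ∀ᵐ ω ∂μ,
    θ i ω = dotp (r i ω) (fun d => β (i + 1) ω d * θ (i + 1) ω)
      - dotp (r i ω) (fun d => M (i + 1) ω d - M i ω d) - rconj (F i ω) (r i ω)

/-- The upper pathwise recursion `θ^{up}(M)`: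
`θ_J = ξ`, `θ_j = F_j(β_{j+1} θ_{j+1} - ΔM_{j+1})`. -/
def IsThetaUp (μ : Measure Ω) (J D : ℕ)
    (F : ℕ → Ω → (Fin D → ℝ) → ℝ) (β : ℕ → Ω → Fin D → ℝ) (ξ : Ω → ℝ)
    (M : ℕ → Ω → Fin D → ℝ) (θ : ℕ → Ω → ℝ) : Prop :=
  (∀ᵐ ω ∂μ, θ J ω = ξ ω) ∧
  ∀ j < J, ∀ᵐ ω ∂μ,
    θ j ω = F j ω (fun d => β (j + 1) ω d * θ (j + 1) ω - (M (j + 1) ω d - M j ω d))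

/-- The optimality condition `r_i^⊤ E_i[β_{i+1} Y_{i+1}] - F_i^{#}(r_i) = F_i(E_i[β_{i+1} Y_{i+1}])`
on the time indices `{j₀, ..., J-1}`. -/
def OptimalityCond (μ : Measure Ω) (ℱ : Filtration ℕ m0) (j₀ J D : ℕ)
    (F : ℕ → Ω → (Fin D → ℝ) → ℝ) (β : ℕ → Ω → Fin D → ℝ)
    (Y : ℕ → Ω → ℝ) (r : ℕ → Ω → Fin D → ℝ) : Prop :=
  ∀ i, j₀ ≤ i → i < J → ∀ᵐ ω ∂μ,
    dotp (r i ω) (cexpV μ (ℱ i) (bprod β Y (i + 1)) ω) - rconj (F i ω) (r i ω)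
      = F i ω (cexpV μ (ℱ i) (bprod β Y (i + 1)) ω)

namespace MemLinfMinus

variable {μ : Measure Ω} {E : Type*} [NormedAddCommGroup E]

lemma integrable {f : Ω → E} (hf : MemLinfMinus μ f) : Integrable f μ :=
  memLp_one_iff_integrable.mp (hf 1 le_rfl ENNReal.one_ne_top)

lemma congr {f g : Ω → E} (hf : MemLinfMinus μ f) (h : f =ᵐ[μ] g) : MemLinfMinus μ g :=
  fun p hp hpt => (hf p hp hpt).ae_eq h

lemma const [IsFiniteMeasure μ] (c : E) : MemLinfMinus μ fun _ => c :=
  fun _ _ _ => memLp_const c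

lemma sub {f g : Ω → E} (hf : MemLinfMinus μ f) (hg : MemLinfMinus μ g) :
    MemLinfMinus μ (f - g) :=
  fun p hp hpt => (hf p hp hpt).sub (hg p hp hpt)

lemma finsetSum {ι : Type*} (s : Finset ι) {f : ι → Ω → E}
    (hf : ∀ i ∈ s, MemLinfMinus μ (f i)) : MemLinfMinus μ fun ω => ∑ i ∈ s, f i ω :=
  fun p hp hpt => memLp_finsetSum s fun i hi => hf i hi p hp hpt

lemma apply {ι : Type*} [Fintype ι] {f : Ω → ι → ℝ} (hf : MemLinfMinus μ f) (i : ι) :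
    MemLinfMinus μ fun ω => f ω i :=
  fun p hp hpt => (hf p hp hpt).eval i

lemma smul [NormedSpace ℝ E] {φ : Ω → ℝ} {f : Ω → E} (hφ : MemLinfMinus μ φ)
    (hf : MemLinfMinus μ f) : MemLinfMinus μ (φ • f) := by
  intro p hp hpt
  have h2p : 1 ≤ 2 * p := hp.trans (le_mul_of_one_le_left zero_le one_le_two)
  have h2pt : 2 * p ≠ ⊤ := ENNReal.mul_ne_top ENNReal.ofNat_ne_top hpt
  have : ENNReal.HolderTriple (2 * p) (2 * p) p := ⟨by
    rw [← two_mul, ENNReal.mul_inv (by simp) (by simp), ← mul_assoc,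
      ENNReal.mul_inv_cancel two_ne_zero ENNReal.ofNat_ne_top, one_mul]⟩
  exact (hf (2 * p) h2p h2pt).smul (hφ (2 * p) h2p h2pt)

lemma mul {f g : Ω → ℝ} (hf : MemLinfMinus μ f) (hg : MemLinfMinus μ g) :
    MemLinfMinus μ fun ω => f ω * g ω :=
  hf.smul hg

lemma dotp {D : ℕ} {f g : Ω → Fin D → ℝ} (hf : MemLinfMinus μ f) (hg : MemLinfMinus μ g) :
    MemLinfMinus μ fun ω => dotp (f ω) (g ω) :=
  finsetSum _ fun d _ => (hf.apply d).mul (hg.apply d)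

end MemLinfMinus

lemma fun_select_eq_sum_indicator {ι E : Type*} [Fintype ι] [AddCommMonoid E] (σ : Ω → ι)
    (g : ι → Ω → E) : (fun ω => g (σ ω) ω) = ∑ i, (σ ⁻¹' {i}).indicator (g i) := by
  ext ω
  rw [Finset.sum_apply, Finset.sum_eq_single (σ ω)]
  · simp
  · intro i _ hi
    exact Set.indicator_of_notMem (by simpa [eq_comm] using hi) _
  · simp

section Selection

variable {ι : Type*} [Fintype ι] [MeasurableSpace ι] [MeasurableSingletonClass ι]
  {E : Type*} [NormedAddCommGroup E] {μ : Measure Ω} {σ : Ω → ι} {g : ι → Ω → E}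

lemma MemLinfMinus.select (hσ : Measurable σ) (hg : ∀ i, MemLinfMinus μ (g i)) :
    MemLinfMinus μ fun ω => g (σ ω) ω := by
  rw [fun_select_eq_sum_indicator]
  intro p hp hpt
  exact memLp_finsetSum' _ fun i _ =>
    (hg i p hp hpt).indicator (hσ (measurableSet_singleton i))

lemma condExp_select [NormedSpace ℝ E] [CompleteSpace E] {m : MeasurableSpace Ω}
    (hm : m ≤ m0) (hσ : Measurable[m] σ) (hg : ∀ i, Integrable (g i) μ) :
    μ[fun ω => g (σ ω) ω|m] =ᵐ[μ] fun ω => μ[g (σ ω)|m] ω := by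
  have hs : ∀ i, MeasurableSet[m] (σ ⁻¹' {i}) := fun i => hσ (measurableSet_singleton i)
  rw [fun_select_eq_sum_indicator]
  refine (condExp_finsetSum (fun i _ => (hg i).indicator (hm _ (hs i))) m).trans ?_
  filter_upwards [ae_all_iff.2 fun i => condExp_indicator (hg i) (hs i)] with ω hω
  simp only [Finset.sum_apply, hω]
  rw [← Finset.sum_apply, ← fun_select_eq_sum_indicator]

end Selection

lemma dotp_sub_le_rconj {D : ℕ} {f : (Fin D → ℝ) → ℝ} {u : Fin D → ℝ} (hu : econj f u ≠ ⊤)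
    (z : Fin D → ℝ) : dotp u z - f z ≤ rconj f u := by
  have hle : ((dotp u z - f z : ℝ) : EReal) ≤ econj f u :=
    le_iSup (fun z => ((dotp u z - f z : ℝ) : EReal)) z
  have := EReal.toReal_le_toReal hle (EReal.coe_ne_bot _) hu
  rwa [EReal.toReal_coe] at this

lemma le_of_dotp_sub_rconj_eq {D : ℕ} {f : (Fin D → ℝ) → ℝ} {u z₀ : Fin D → ℝ}
    (hu : econj f u ≠ ⊤) (heq : dotp u z₀ - rconj f u = f z₀) (z : Fin D → ℝ) :
    f z₀ + dotp u (z - z₀) ≤ f z := by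
  have hlin : dotp u (z - z₀) = dotp u z - dotp u z₀ := dotProduct_sub u z z₀
  linarith [dotp_sub_le_rconj hu z]

lemma ConvexOn.nonneg_of_subgradient_of_ray_le {E : Type*} [AddCommGroup E] [Module ℝ E]
    {f : E → ℝ} (hf : ConvexOn ℝ Set.univ f) {ℓ : E →ₗ[ℝ] ℝ} {z₀ v : E}
    (hsub : ∀ z, f z₀ + ℓ (z - z₀) ≤ f z) (hray : ∀ n : ℕ, f ((-(n : ℝ)) • v) ≤ f 0) :
    0 ≤ ℓ v := by
  have hbound : ∀ n : ℕ, (n : ℝ) * -ℓ v ≤ (f ((2 : ℝ) • z₀) + f 0) / 2 - f z₀ := by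
    intro n
    have hmid : (1 / 2 : ℝ) • ((2 : ℝ) • z₀) + (1 / 2 : ℝ) • ((-((2 * n : ℕ) : ℝ)) • v)
        = z₀ - (n : ℝ) • v := by
      push_cast; module
    have hconv := hf.2 (Set.mem_univ ((2 : ℝ) • z₀)) (Set.mem_univ ((-((2 * n : ℕ) : ℝ)) • v))
      (by norm_num : (0 : ℝ) ≤ 1 / 2) (by norm_num : (0 : ℝ) ≤ 1 / 2) (by norm_num)
    rw [hmid, smul_eq_mul, smul_eq_mul] at hconv
    have hsub' := hsub (z₀ - (n : ℝ) • v)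
    rw [sub_sub_cancel_left, map_neg, map_smul, smul_eq_mul] at hsub'
    linarith [hray (2 * n)]
  by_contra! hneg
  obtain ⟨n, hn⟩ := Archimedean.arch ((f ((2 : ℝ) • z₀) + f 0) / 2 - f z₀ + 1) (neg_pos.2 hneg)
  rw [nsmul_eq_mul] at hn
  linarith [hbound n]

lemma stronglyMeasurable_apply_of_continuous {E : Type*} [TopologicalSpace E]
    [TopologicalSpace.MetrizableSpace E] [MeasurableSpace E] [SecondCountableTopology E]
    [OpensMeasurableSpace E] {m : MeasurableSpace Ω} {f : Ω → E → ℝ}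
    (hcont : ∀ ω, Continuous (f ω)) (hf : ∀ z, StronglyMeasurable[m] fun ω => f ω z)
    {g : Ω → E} (hg : Measurable[m] g) : StronglyMeasurable[m] fun ω => f ω (g ω) :=
  (@stronglyMeasurable_uncurry_of_continuous_of_stronglyMeasurable Ω ℝ E _ _ _ _ _ _ _ m
    (fun z ω => f ω z) hcont hf).comp_measurable (hg.prodMk measurable_id)

def dotpL (D : ℕ) : (Fin D → ℝ) →L[ℝ] (Fin D → ℝ) →L[ℝ] ℝ :=
  (dotProductBilin ℝ ℝ).toContinuousBilinearMap

lemma StronglyMeasurable.dotp {m : MeasurableSpace Ω} {D : ℕ} {f g : Ω → Fin D → ℝ}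
    (hf : StronglyMeasurable[m] f) (hg : StronglyMeasurable[m] g) :
    StronglyMeasurable[m] fun ω => dotp (f ω) (g ω) :=
  (dotpL D).continuous₂.comp_stronglyMeasurable (hf.prodMk hg)

lemma dotp_mul_right {D : ℕ} (u v : Fin D → ℝ) (a : ℝ) :
    dotp u (fun d => v d * a) = dotp u v * a := by
  simp only [dotp, Finset.sum_mul, mul_assoc]

lemma measurable_cexpV (μ : Measure Ω) (m : MeasurableSpace Ω) {D : ℕ} (f : Ω → Fin D → ℝ) :
    Measurable[m] (cexpV μ m f) :=
  measurable_pi_iff.2 fun _ => stronglyMeasurable_condExp.measurable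

section ConditionalExpectation

variable {μ : Measure Ω} {m : MeasurableSpace Ω} {D : ℕ}

lemma cexpV_ae_eq_condExp {f : Ω → Fin D → ℝ} (hf : Integrable f μ) :
    cexpV μ m f =ᵐ[μ] μ[f|m] := by
  filter_upwards [ae_all_iff.2 fun d =>
    ((ContinuousLinearMap.proj (R := ℝ) (φ := fun _ : Fin D => ℝ) d).comp_condExp_comm
      hf (m := m)).symm] with ω hω
  exact funext hω

lemma condExp_dotp_of_stronglyMeasurable_left {r X : Ω → Fin D → ℝ}
    (hr : StronglyMeasurable[m] r) (hrX : Integrable (fun ω => dotp (r ω) (X ω)) μ)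
    (hX : Integrable X μ) :
    μ[fun ω => dotp (r ω) (X ω)|m] =ᵐ[μ] fun ω => dotp (r ω) (cexpV μ m X ω) := by
  filter_upwards [condExp_bilin_of_stronglyMeasurable_left (dotpL D) hr hrX hX,
    cexpV_ae_eq_condExp (m := m) hX] with ω h1 h2
  rw [h2]
  exact h1

lemma MeasureTheory.Martingale.condExp_sub_ae_eq_zero {E : Type*} [NormedAddCommGroup E]
    [NormedSpace ℝ E] [CompleteSpace E] {ℱ : Filtration ℕ m0} {M : ℕ → Ω → E}
    (hM : Martingale M ℱ μ)
    {i j : ℕ} (hij : i ≤ j) : μ[M j - M i|ℱ i] =ᵐ[μ] 0 := by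
  filter_upwards [condExp_sub (hM.integrable j) (hM.integrable i) (ℱ i),
    hM.condExp_ae_eq hij, hM.condExp_ae_eq le_rfl] with ω h1 h2 h3
  rw [h1, Pi.sub_apply, h2, h3, sub_self, Pi.zero_apply]

lemma condExp_mul_le_condExp_mul_of_le_condExp [IsFiniteMeasure μ] {m' : MeasurableSpace Ω}
    (hmm' : m ≤ m') (hm' : m' ≤ m0) {w Y θ : Ω → ℝ} (hw : StronglyMeasurable[m'] w)
    (hw0 : 0 ≤ᵐ[μ] w) (hYθ : Y ≤ᵐ[μ] μ[θ|m']) (hwY : Integrable (w * Y) μ)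
    (hwθ : Integrable (w * θ) μ) (hθ : Integrable θ μ) :
    μ[w * Y|m] ≤ᵐ[μ] μ[w * θ|m] := by
  have hle : w * Y ≤ᵐ[μ] μ[w * θ|m'] := by
    filter_upwards [condExp_mul_of_stronglyMeasurable_left hw hwθ hθ, hw0, hYθ]
      with ω h1 h2 h3
    rw [h1]
    exact mul_le_mul_of_nonneg_left h3 h2
  exact (condExp_mono hwY integrable_condExp hle).trans_eq (condExp_condExp_of_le hmm' hm')

end ConditionalExpectation

section DynamicProgram

variable {μ : Measure Ω} {ℱ : Filtration ℕ m0} {J D : ℕ} {F : ℕ → Ω → (Fin D → ℝ) → ℝ}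
  {β : ℕ → Ω → Fin D → ℝ} {ξ : Ω → ℝ} {j₀ : ℕ} {Y θ : ℕ → Ω → ℝ} {r M : ℕ → Ω → Fin D → ℝ}

lemma MemLinfMinus.bprod {j : ℕ} (hβ : MemLinfMinus μ (β j))
    (hY : MemLinfMinus μ (Y j)) : MemLinfMinus μ (bprod β Y j) :=
  (hY.smul hβ).congr (.of_forall fun ω => funext fun d => mul_comm (Y j ω) (β j ω d))

lemma IsThetaLowFrom.memLinfMinus (hθ : IsThetaLowFrom μ j₀ J D F β ξ r M θ)
    (hr : IsAdmissibleFrom μ ℱ j₀ J D F r)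
    (hβ : ∀ j ≤ J, MemLinfMinus μ (β j)) (hξ : MemLinfMinus μ ξ)
    (hM : ∀ j, MemLinfMinus μ (M j)) {k : ℕ} (hk₀ : j₀ ≤ k) (hkJ : k ≤ J) :
    MemLinfMinus μ (θ k) := by
  induction hkJ using Nat.decreasingInduction with
  | self => exact hξ.congr (Filter.EventuallyEq.symm hθ.1)
  | of_succ k hk ih =>
    obtain ⟨-, hr_int, -, hc_int⟩ := hr k hk₀ hk
    have hθ' := ih (hk₀.trans k.le_succ)
    exact (((hr_int.dotp ((hβ (k + 1) hk).bprod hθ')).sub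
      (hr_int.dotp ((hM (k + 1)).sub (hM k)))).sub hc_int).congr
        (Filter.EventuallyEq.symm (hθ.2 k hk₀ hk))

lemma ae_nonneg_dotp_of_monoAssumption [IsFiniteMeasure μ] (hmono : MonoAssumption μ J D F β)
    {k : ℕ} (hk : k < J) (hconv : ∀ ω, ConvexOn ℝ Set.univ (F k ω)) {u z : Ω → Fin D → ℝ}
    (hfin : ∀ᵐ ω ∂μ, econj (F k ω) (u ω) ≠ ⊤)
    (hopt : ∀ᵐ ω ∂μ, dotp (u ω) (z ω) - rconj (F k ω) (u ω) = F k ω (z ω)) :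
    ∀ᵐ ω ∂μ, 0 ≤ dotp (u ω) (β (k + 1) ω) := by
  have hray : ∀ᵐ ω ∂μ, ∀ n : ℕ, F k ω ((-(n : ℝ)) • β (k + 1) ω) ≤ F k ω 0 := by
    refine ae_all_iff.2 fun n => ?_
    filter_upwards [hmono k hk (fun _ => 0) (fun _ => -(n : ℝ)) (.const 0) (.const _)
      (.of_forall fun _ => by simp)] with ω hω
    convert hω using 2 <;> ext d <;> simp [mul_comm]
  filter_upwards [hfin, hopt, hray] with ω h1 h2 h3
  exact (hconv ω).nonneg_of_subgradient_of_ray_le (ℓ := dotProductBilin ℝ ℝ (u ω))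
    (le_of_dotp_sub_rconj_eq h1 h2) h3

lemma dotp_cexpV_bprod_le_condExp_dotp_bprod [IsFiniteMeasure μ] {m m' : MeasurableSpace Ω}
    (hmm' : m ≤ m') (hm' : m' ≤ m0) {j : ℕ} {u : Ω → Fin D → ℝ}
    (hu : StronglyMeasurable[m] u) (hu_int : MemLinfMinus μ u)
    (hβ : StronglyMeasurable[m'] (β j)) (hβ_int : MemLinfMinus μ (β j))
    (hY : MemLinfMinus μ (Y j)) (hθ : MemLinfMinus μ (θ j))
    (huβ : ∀ᵐ ω ∂μ, 0 ≤ dotp (u ω) (β j ω)) (hYθ : Y j ≤ᵐ[μ] μ[θ j|m']) :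
    (fun ω => dotp (u ω) (cexpV μ m (bprod β Y j) ω))
      ≤ᵐ[μ] μ[fun ω => dotp (u ω) (bprod β θ j ω)|m] := by
  have hw := hu_int.dotp hβ_int
  have hβY := hβ_int.bprod hY
  have hsplit : ∀ Z : ℕ → Ω → ℝ,
      (fun ω => dotp (u ω) (bprod β Z j ω)) = (fun ω => dotp (u ω) (β j ω)) * Z j :=
    fun Z => funext fun ω => dotp_mul_right _ _ _
  have hcomp := condExp_mul_le_condExp_mul_of_le_condExp hmm' hm'
    (StronglyMeasurable.dotp (hu.mono hmm') hβ) huβ hYθ (hw.mul hY).integrable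
    (hw.mul hθ).integrable hθ.integrable
  rw [← hsplit, ← hsplit] at hcomp
  filter_upwards [condExp_dotp_of_stronglyMeasurable_left hu (hu_int.dotp hβY).integrable
    hβY.integrable, hcomp] with ω h1 h2
  rw [← h1]
  exact h2

-- The optimality condition exhibits `F_k^#(r_k)` as a.e. equal to an `ℱ k`-measurable function.
lemma condExp_rconj_ae_eq [IsFiniteMeasure μ] (hset : Setting μ ℱ J D F β ξ)
    (hr : IsAdmissibleFrom μ ℱ j₀ J D F r) (hropt : OptimalityCond μ ℱ j₀ J D F β Y r)
    {k : ℕ} (hk₀ : j₀ ≤ k) (hk : k < J) :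
    μ[fun ω => rconj (F k ω) (r k ω)|ℱ k] =ᵐ[μ] fun ω => rconj (F k ω) (r k ω) := by
  obtain ⟨hr_meas, -, -, hc_int⟩ := hr k hk₀ hk
  have hz := measurable_cexpV μ (ℱ k) (bprod β Y (k + 1))
  have hFz : StronglyMeasurable[ℱ k] fun ω => F k ω (cexpV μ (ℱ k) (bprod β Y (k + 1)) ω) :=
    stronglyMeasurable_apply_of_continuous
      (fun ω => continuousOn_univ.mp ((hset.F_convex k hk ω).continuousOn isOpen_univ))
      (hset.F_adapted k hk) hz
  refine condExp_of_aestronglyMeasurable' (ℱ.le k)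
    ⟨_, (StronglyMeasurable.dotp hr_meas hz.stronglyMeasurable).sub hFz, ?_⟩ hc_int.integrable
  filter_upwards [hropt k hk₀ hk] with ω hω
  rw [Pi.sub_apply]
  linarith

lemma F_cexpV_bprod_le_condExp_thetaLow_of_le [IsFiniteMeasure μ]
    (hset : Setting μ ℱ J D F β ξ) (hmono : MonoAssumption μ J D F β)
    (hr : IsAdmissibleFrom μ ℱ j₀ J D F r) (hropt : OptimalityCond μ ℱ j₀ J D F β Y r)
    (hM : IsMartD μ ℱ M) (hθ : IsThetaLowFrom μ j₀ J D F β ξ r M θ) {k : ℕ} (hk₀ : j₀ ≤ k)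
    (hk : k < J) (hY : MemLinfMinus μ (Y (k + 1)))
    (hYθ : Y (k + 1) ≤ᵐ[μ] μ[θ (k + 1)|ℱ (k + 1)]) :
    ∀ᵐ ω ∂μ, F k ω (cexpV μ (ℱ k) (bprod β Y (k + 1)) ω) ≤ μ[θ k|ℱ k] ω := by
  obtain ⟨hr_meas, hr_int, hr_fin, hc_int⟩ := hr k hk₀ hk
  set z := cexpV μ (ℱ k) (bprod β Y (k + 1))
  set c : Ω → ℝ := fun ω => rconj (F k ω) (r k ω)
  set f₁ : Ω → ℝ := fun ω => dotp (r k ω) (bprod β θ (k + 1) ω)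
  set f₂ : Ω → ℝ := fun ω => dotp (r k ω) ((M (k + 1) - M k) ω)
  have hf₁ : MemLinfMinus μ f₁ := hr_int.dotp ((hset.β_int (k + 1) hk).bprod
    (hθ.memLinfMinus hr hset.β_int hset.ξ_int hM.2 (hk₀.trans k.le_succ) hk))
  have hΔM := (hM.2 (k + 1)).sub (hM.2 k)
  have hf₂ : MemLinfMinus μ f₂ := hr_int.dotp hΔM
  have hc : μ[c|ℱ k] =ᵐ[μ] c := condExp_rconj_ae_eq hset hr hropt hk₀ hk
  have hf₂_zero : μ[f₂|ℱ k] =ᵐ[μ] 0 := by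
    filter_upwards [condExp_dotp_of_stronglyMeasurable_left hr_meas hf₂.integrable
      hΔM.integrable, cexpV_ae_eq_condExp hΔM.integrable,
      hM.1.condExp_sub_ae_eq_zero k.le_succ] with ω h1 h2 h3
    rw [h1, h2, h3]
    exact dotProduct_zero _
  have hf₁_ge : (fun ω => dotp (r k ω) (z ω)) ≤ᵐ[μ] μ[f₁|ℱ k] :=
    dotp_cexpV_bprod_le_condExp_dotp_bprod (ℱ.mono k.le_succ) (ℱ.le (k + 1)) hr_meas hr_int
      (hset.β_adapted (k + 1) hk) (hset.β_int (k + 1) hk) hY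
      (hθ.memLinfMinus hr hset.β_int hset.ξ_int hM.2 (hk₀.trans k.le_succ) hk)
      (ae_nonneg_dotp_of_monoAssumption hmono hk (hset.F_convex k hk) hr_fin (hropt k hk₀ hk))
      hYθ
  have hθk : μ[θ k|ℱ k] =ᵐ[μ] μ[f₁|ℱ k] - μ[f₂|ℱ k] - μ[c|ℱ k] :=
    (condExp_congr_ae (hθ.2 k hk₀ hk : θ k =ᵐ[μ] f₁ - f₂ - c)).trans
      ((condExp_sub (hf₁.sub hf₂).integrable hc_int.integrable _).trans
        ((condExp_sub hf₁.integrable hf₂.integrable _).sub .rfl))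
  filter_upwards [hθk, hc, hf₂_zero, hf₁_ge, hropt k hk₀ hk] with ω h1 h2 h3 h4 h5
  rw [h1, Pi.sub_apply, Pi.sub_apply, h2, h3]
  simp only [c, Pi.zero_apply] at h4 h5 ⊢
  linarith

lemma F_cexpV_bprod_le_condExp_thetaLow [IsFiniteMeasure μ]
    (hset : Setting μ ℱ J D F β ξ) (hmono : MonoAssumption μ J D F β)
    (hr : IsAdmissibleFrom μ ℱ j₀ J D F r) (hropt : OptimalityCond μ ℱ j₀ J D F β Y r)
    (hM : IsMartD μ ℱ M) (hθ : IsThetaLowFrom μ j₀ J D F β ξ r M θ)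
    (hY : ∀ j, j₀ < j → j ≤ J → MemLinfMinus μ (Y j))
    (hYsub : ∀ j, j₀ < j → j < J →
      ∀ᵐ ω ∂μ, Y j ω ≤ F j ω (cexpV μ (ℱ j) (bprod β Y (j + 1)) ω))
    (hYJ : ∀ᵐ ω ∂μ, Y J ω ≤ ξ ω) {k : ℕ} (hk₀ : j₀ ≤ k) (hk : k < J) :
    ∀ᵐ ω ∂μ, F k ω (cexpV μ (ℱ k) (bprod β Y (k + 1)) ω) ≤ μ[θ k|ℱ k] ω := by
  have hYθ : ∀ j, j₀ < j → j ≤ J → Y j ≤ᵐ[μ] μ[θ j|ℱ j] := by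
    intro j hj₀ hj
    induction hj using Nat.decreasingInduction with
    | self =>
      have hθJ : μ[θ J|ℱ J] =ᵐ[μ] ξ := (condExp_congr_ae hθ.1).trans
        (condExp_of_stronglyMeasurable (ℱ.le J) hset.ξ_meas hset.ξ_int.integrable).eventuallyEq
      filter_upwards [hYJ, hθJ] with ω h1 h2
      rw [h2]
      exact h1
    | of_succ j hj ih =>
      filter_upwards [hYsub j hj₀ hj, F_cexpV_bprod_le_condExp_thetaLow_of_le hset hmono hr
        hropt hM hθ hj₀.le hj (hY (j + 1) (by omega) hj) (ih (by omega))] with ω h1 h2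
      exact h1.trans h2
  exact F_cexpV_bprod_le_condExp_thetaLow_of_le hset hmono hr hropt hM hθ hk₀ hk
    (hY (k + 1) (by omega) hk) (hYθ (k + 1) (by omega) hk)

end DynamicProgram

section FamilyOfSubsolutions

variable {μ : Measure Ω} {ℱ : Filtration ℕ m0} {J D : ℕ} {F : ℕ → Ω → (Fin D → ℝ) → ℝ}
  {β : ℕ → Ω → Fin D → ℝ} {ξ : Ω → ℝ} {ι : Type*} {Yfam : ι → ℕ → Ω → ℝ} {Y : ℕ → Ω → ℝ}
  {σ : Ω → ι}

lemma cexpV_bprod_ae_eq_select [Fintype ι] [MeasurableSpace ι] [MeasurableSingletonClass ι]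
    [IsFiniteMeasure μ] {m : MeasurableSpace Ω} (hm : m ≤ m0)
    {j : ℕ} (hβ : MemLinfMinus μ (β j)) (hYfam : ∀ l, MemLinfMinus μ (Yfam l j))
    (hσ : Measurable[m] σ) (hY : ∀ᵐ ω ∂μ, Y j ω = Yfam (σ ω) j ω) :
    ∀ᵐ ω ∂μ, cexpV μ m (bprod β Y j) ω = cexpV μ m (bprod β (Yfam (σ ω)) j) ω := by
  have hint : ∀ l, Integrable (bprod β (Yfam l) j) μ := fun l => (hβ.bprod (hYfam l)).integrable
  have hsel : bprod β Y j =ᵐ[μ] fun ω => bprod β (Yfam (σ ω)) j ω := by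
    filter_upwards [hY] with ω hω
    show (fun d => β j ω d * Y j ω) = fun d => β j ω d * Yfam (σ ω) j ω
    rw [hω]
  have hint_sel : Integrable (bprod β Y j) μ :=
    ((MemLinfMinus.select (hσ.mono hm le_rfl) fun l => hβ.bprod (hYfam l)).congr
      hsel.symm).integrable
  filter_upwards [cexpV_ae_eq_condExp (m := m) hint_sel, condExp_congr_ae (m := m) hsel,
    condExp_select hm hσ hint, ae_all_iff.2 fun l => cexpV_ae_eq_condExp (m := m) (hint l)]
    with ω h1 h2 h3 h4
  rw [h1, h2, h3, h4]

lemma F_cexpV_bprod_ae_eq_sup' [Fintype ι] [MeasurableSpace ι] [MeasurableSingletonClass ι]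
    [IsFiniteMeasure μ] {k : ℕ} {K : Finset ι} (hK : K.Nonempty)
    (hβ : MemLinfMinus μ (β (k + 1))) (hYfam : ∀ l, MemLinfMinus μ (Yfam l (k + 1)))
    (hσ : Measurable[ℱ k] σ) (hY : ∀ᵐ ω ∂μ, Y (k + 1) ω = Yfam (σ ω) (k + 1) ω)
    (hmem : ∀ᵐ ω ∂μ, σ ω ∈ K)
    (hmax : ∀ᵐ ω ∂μ, ∀ l ∈ K, F k ω (cexpV μ (ℱ k) (bprod β (Yfam l) (k + 1)) ω)
      ≤ F k ω (cexpV μ (ℱ k) (bprod β (Yfam (σ ω)) (k + 1)) ω)) :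
    ∀ᵐ ω ∂μ, F k ω (cexpV μ (ℱ k) (bprod β Y (k + 1)) ω)
      = K.sup' hK fun l => F k ω (cexpV μ (ℱ k) (bprod β (Yfam l) (k + 1)) ω) := by
  filter_upwards [cexpV_bprod_ae_eq_select (ℱ.le k) hβ hYfam hσ hY, hmem, hmax]
    with ω h1 h2 h3
  rw [h1]
  exact le_antisymm
    (Finset.le_sup' (f := fun l => F k ω (cexpV μ (ℱ k) (bprod β (Yfam l) (k + 1)) ω)) h2)
    (Finset.sup'_le _ _ h3)

lemma sup'_le_F_cexpV_bprod [Countable ι] (hfam : ∀ l, IsSubsolution μ ℱ J D F β ξ (Yfam l))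
    {k : ℕ} (hk : k < J) {K : Finset ι} (hK : K.Nonempty)
    (hsup : ∀ᵐ ω ∂μ, F k ω (cexpV μ (ℱ k) (bprod β Y (k + 1)) ω)
      = K.sup' hK fun l => F k ω (cexpV μ (ℱ k) (bprod β (Yfam l) (k + 1)) ω)) :
    ∀ᵐ ω ∂μ,
      K.sup' hK (fun l => Yfam l k ω) ≤ F k ω (cexpV μ (ℱ k) (bprod β Y (k + 1)) ω) := by
  filter_upwards [hsup, ae_all_iff.2 fun l => (hfam l).2.2 k hk] with ω h1 h2
  rw [h1]
  exact Finset.sup'_mono_fun fun l _ => h2 l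

end FamilyOfSubsolutions

theorem family_of_subsolutions_improvement_general
    (μ : Measure Ω) [IsProbabilityMeasure μ] (ℱ : Filtration ℕ m0)
    (J D : ℕ) (hJ : 1 ≤ J)
    (F : ℕ → Ω → (Fin D → ℝ) → ℝ) (β : ℕ → Ω → Fin D → ℝ) (ξ : Ω → ℝ)
    (hset : Setting μ ℱ J D F β ξ) (hmono : MonoAssumption μ J D F β)
    (n : ℕ) (Yfam : Fin n → ℕ → Ω → ℝ)
    (hfam : ∀ l, IsSubsolution μ ℱ J D F β ξ (Yfam l))
    (K : ℕ → Finset (Fin n))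
    (hKne : ∀ j, (K j).Nonempty) (hKmono : ∀ j, K j ⊆ K (j + 1))
    (lstar : ℕ → Ω → Fin n)
    (hpred : ∀ j, 1 ≤ j → j ≤ J → Measurable[ℱ (j - 1)] (lstar j))
    (hmem : ∀ j, 1 ≤ j → j ≤ J → ∀ᵐ ω ∂μ, lstar j ω ∈ K j)
    (hmax : ∀ j, 1 ≤ j → j ≤ J → ∀ᵐ ω ∂μ, ∀ l ∈ K j,
      F (j - 1) ω (cexpV μ (ℱ (j - 1)) (bprod β (Yfam l) j) ω)
        ≤ F (j - 1) ω (cexpV μ (ℱ (j - 1)) (bprod β (Yfam (lstar j ω)) j) ω))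
    (Ybar : ℕ → Ω → ℝ)
    (hYbarj : ∀ j, 1 ≤ j → j ≤ J → ∀ᵐ ω ∂μ, Ybar j ω = Yfam (lstar j ω) j ω)
    (r : ℕ → Ω → Fin D → ℝ)
    (hr : IsAdmissibleFrom μ ℱ 0 J D F r)
    (hropt : OptimalityCond μ ℱ 0 J D F β Ybar r)
    (M : ℕ → Ω → Fin D → ℝ) (hM : IsMartD μ ℱ M)
    (θ : ℕ → Ω → ℝ) (hθ : IsThetaLowFrom μ 0 J D F β ξ r M θ) :
    ∀ j < J, ∀ᵐ ω ∂μ,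
      F j ω (cexpV μ (ℱ j) (bprod β Ybar (j + 1)) ω)
          = (K (j + 1)).sup' (hKne (j + 1))
              (fun l => F j ω (cexpV μ (ℱ j) (bprod β (Yfam l) (j + 1)) ω)) ∧
      (K (j + 1)).sup' (hKne (j + 1)) (fun l => Yfam l j ω)
          ≤ F j ω (cexpV μ (ℱ j) (bprod β Ybar (j + 1)) ω) ∧
      F j ω (cexpV μ (ℱ j) (bprod β Ybar (j + 1)) ω) ≤ (μ[θ j|ℱ j]) ω := by
  have hYfam : ∀ l, ∀ j ≤ J, MemLinfMinus μ (Yfam l j) := fun l j hj => ((hfam l).1 j hj).2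
  have hsup := fun j (hj : j < J) =>
    F_cexpV_bprod_ae_eq_sup' (hKne (j + 1)) (hset.β_int (j + 1) hj) (hYfam · (j + 1) hj)
      (hpred (j + 1) j.succ_pos hj) (hYbarj (j + 1) j.succ_pos hj) (hmem (j + 1) j.succ_pos hj)
      (hmax (j + 1) j.succ_pos hj)
  have hsub := fun j (hj : j < J) => sup'_le_F_cexpV_bprod hfam hj (hKne (j + 1)) (hsup j hj)
  have hYbar : ∀ j, 0 < j → j ≤ J → MemLinfMinus μ (Ybar j) := fun j hj hjJ =>
    (MemLinfMinus.select ((hpred j hj hjJ).mono (ℱ.le _) le_rfl) (hYfam · j hjJ)).congr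
      (Filter.EventuallyEq.symm (hYbarj j hj hjJ))
  have hYbar_sub : ∀ j, 0 < j → j < J →
      ∀ᵐ ω ∂μ, Ybar j ω ≤ F j ω (cexpV μ (ℱ j) (bprod β Ybar (j + 1)) ω) := by
    intro j hj hjJ
    filter_upwards [hYbarj j hj hjJ.le, hmem j hj hjJ.le, hsub j hjJ] with ω h1 h2 h3
    rw [h1]
    exact (Finset.le_sup' (fun l => Yfam l j ω) (hKmono j h2)).trans h3
  have hYbar_J : ∀ᵐ ω ∂μ, Ybar J ω ≤ ξ ω := by
    filter_upwards [hYbarj J hJ le_rfl, ae_all_iff.2 fun l => (hfam l).2.1] with ω h1 h2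
    rw [h1]
    exact h2 _
  intro j hj
  filter_upwards [hsup j hj, hsub j hj, F_cexpV_bprod_le_condExp_thetaLow hset hmono hr hropt hM
    hθ hYbar hYbar_sub hYbar_J j.zero_le hj] with ω h1 h2 h3
  exact ⟨h1, h2, h3⟩

/-- Simultaneous improvement of a family of subsolutions: with `Ȳ` the
subsolution built from the family `(Ȳ^{l})_{l ∈ I}` via the maximizing selector `l*` over
nondecreasing sets `K(j)`, and `r̄ ∈ A_0` satisfying the optimality condition with respect to
`Ȳ`, for any `M ∈ M_D` it holds `P`-a.s. for all `j = 0,…,J-1` that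
`E_j[θ_j^{low}(r̄,M)] ≥ F_j(E_j[β_{j+1} Ȳ_{j+1}]) = max_{l ∈ K(j+1)} F_j(E_j[β_{j+1} Ȳ_{j+1}^{l}])
≥ max_{l ∈ K(j+1)} Ȳ_j^{l}`. -/
theorem family_of_subsolutions_improvement
    (μ : Measure Ω) [IsProbabilityMeasure μ] (ℱ : Filtration ℕ m0)
    (J D : ℕ) (hJ : 1 ≤ J)
    (F : ℕ → Ω → (Fin D → ℝ) → ℝ) (β : ℕ → Ω → Fin D → ℝ) (ξ : Ω → ℝ)
    (hset : Setting μ ℱ J D F β ξ) (hmono : MonoAssumption μ J D F β)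
    (n : ℕ) (Yfam : Fin n → ℕ → Ω → ℝ)
    (hfam : ∀ l, IsSubsolution μ ℱ J D F β ξ (Yfam l))
    (K : ℕ → Finset (Fin n))
    (hKne : ∀ j, (K j).Nonempty) (hKmono : ∀ j, K j ⊆ K (j + 1))
    (lstar : ℕ → Ω → Fin n)
    (hpred : ∀ j, 1 ≤ j → j ≤ J → Measurable[ℱ (j - 1)] (lstar j))
    (hmem : ∀ j, 1 ≤ j → j ≤ J → ∀ᵐ ω ∂μ, lstar j ω ∈ K j)
    (hmax : ∀ j, 1 ≤ j → j ≤ J → ∀ᵐ ω ∂μ, ∀ l ∈ K j,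
      F (j - 1) ω (cexpV μ (ℱ (j - 1)) (bprod β (Yfam l) j) ω)
        ≤ F (j - 1) ω (cexpV μ (ℱ (j - 1)) (bprod β (Yfam (lstar j ω)) j) ω))
    (Ybar : ℕ → Ω → ℝ)
    (hYbar0 : ∀ᵐ ω ∂μ, Ybar 0 ω = F 0 ω (cexpV μ (ℱ 0) (bprod β Ybar 1) ω))
    (hYbarj : ∀ j, 1 ≤ j → j ≤ J → ∀ᵐ ω ∂μ, Ybar j ω = Yfam (lstar j ω) j ω)
    (r : ℕ → Ω → Fin D → ℝ)
    (hr : IsAdmissibleFrom μ ℱ 0 J D F r)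
    (hropt : OptimalityCond μ ℱ 0 J D F β Ybar r)
    (M : ℕ → Ω → Fin D → ℝ) (hM : IsMartD μ ℱ M)
    (θ : ℕ → Ω → ℝ) (hθ : IsThetaLowFrom μ 0 J D F β ξ r M θ) :
    ∀ j < J, ∀ᵐ ω ∂μ,
      F j ω (cexpV μ (ℱ j) (bprod β Ybar (j + 1)) ω)
          = (K (j + 1)).sup' (hKne (j + 1))
              (fun l => F j ω (cexpV μ (ℱ j) (bprod β (Yfam l) (j + 1)) ω)) ∧
      (K (j + 1)).sup' (hKne (j + 1)) (fun l => Yfam l j ω)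
          ≤ F j ω (cexpV μ (ℱ j) (bprod β Ybar (j + 1)) ω) ∧
      F j ω (cexpV μ (ℱ j) (bprod β Ybar (j + 1)) ω) ≤ (μ[θ j|ℱ j]) ω :=
  family_of_subsolutions_improvement_general μ ℱ J D hJ F β ξ hset hmono n Yfam hfam K hKne hKmono
    lstar hpred hmem hmax Ybar hYbarj r hr hropt M hM θ hθ

end
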